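/- For every t ≥ 1, the infimum over all (u_1, …, u_t) ∈ (ℝ^d)^t of Q_t(u_1, …, u_t) is attained and equals −e_tᵀ D_t^{−1} e_t + f_t. -/

import Mathlib

set_option autoImplicit false

open Matrix Finset

noncomputable section

/-- `D_1 = b I + x_1 x_1ᵀ`, `D_t = (D_{t-1}⁻¹ + c⁻¹ I)⁻¹ + x_t x_tᵀ` for `t ≥ 2`. -/
def lasecD (d : ℕ) (b c : ℝ) (x : ℕ → Fin d → ℝ) : ℕ → Matrix (Fin d) (Fin d) ℝ
  | 0 => 1  -- unused
  | 1 => b • (1 : Matrix (Fin d) (Fin d) ℝ) + vecMulVec (x 1) (x 1)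
  | t + 2 => ((lasecD d b c x (t + 1))⁻¹ + c⁻¹ • (1 : Matrix (Fin d) (Fin d) ℝ))⁻¹
      + vecMulVec (x (t + 2)) (x (t + 2))

/-- `e_1 = y_1 x_1`, `e_t = (I + c⁻¹ D_{t-1})⁻¹ e_{t-1} + y_t x_t` for `t ≥ 2`. -/
def lasecE (d : ℕ) (b c : ℝ) (x : ℕ → Fin d → ℝ) (y : ℕ → ℝ) : ℕ → (Fin d → ℝ)
  | 0 => 0  -- unused
  | 1 => y 1 • x 1
  | t + 2 => ((1 : Matrix (Fin d) (Fin d) ℝ) + c⁻¹ • lasecD d b c x (t + 1))⁻¹ *ᵥ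
        lasecE d b c x y (t + 1) + y (t + 2) • x (t + 2)

/-- `f_1 = y_1²`, `f_t = f_{t-1} - e_{t-1}ᵀ (c I + D_{t-1})⁻¹ e_{t-1} + y_t²` for `t ≥ 2`. -/
def lasecF (d : ℕ) (b c : ℝ) (x : ℕ → Fin d → ℝ) (y : ℕ → ℝ) : ℕ → ℝ
  | 0 => 0  -- unused
  | 1 => (y 1) ^ 2
  | t + 2 => lasecF d b c x y (t + 1)
      - lasecE d b c x y (t + 1) ⬝ᵥ
          ((c • (1 : Matrix (Fin d) (Fin d) ℝ) + lasecD d b c x (t + 1))⁻¹ *ᵥ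
            lasecE d b c x y (t + 1))
      + (y (t + 2)) ^ 2

/-- `Q_t(u_1,…,u_t) = b‖u_1‖² + c Σ_{s=1}^{t-1} ‖u_{s+1}-u_s‖² + Σ_{s=1}^{t} (y_s - u_sᵀx_s)²`. -/
def lasecQ (d : ℕ) (b c : ℝ) (x : ℕ → Fin d → ℝ) (y : ℕ → ℝ) (t : ℕ)
    (u : ℕ → Fin d → ℝ) : ℝ :=
  b * (∑ i, (u 1 i) ^ 2) + c * ∑ s ∈ Icc 1 (t - 1), ∑ i, (u (s + 1) i - u s i) ^ 2
    + ∑ s ∈ Icc 1 t, (y s - u s ⬝ᵥ x s) ^ 2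

/-!
Dynamic programming. Let `V_t(w)` be the least value of `Q_t` among the `u` with `u_t = w`.
Then `V_1(w) = b‖w‖² + (y_1 - wᵀx_1)²` and
`V_{t+1}(w) = min_v (V_t(v) + c‖w - v‖²) + (y_{t+1} - wᵀx_{t+1})²`.
By induction `V_t(w) = wᵀD_t w - 2 e_tᵀw + f_t`: completing the square in `v` turns
`vᵀDv - 2eᵀv + f + c‖w - v‖²` into a square plus a quadratic in `w` with matrix
`(D⁻¹ + c⁻¹I)⁻¹`, linear part `(I + c⁻¹D)⁻¹e` and constant `f - eᵀ(cI + D)⁻¹e`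
(a Woodbury-type identity), and the squared residual then adds `x xᵀ`, `y x` and `y²`.
Minimising `V_t` over `w`, attained at `w = D_t⁻¹e_t`, gives `-e_tᵀD_t⁻¹e_t + f_t`.
-/

namespace Matrix

variable {n : Type*} [Fintype n]

lemma IsSymm.dotProduct_mulVec_comm {R : Type*} [CommSemiring R] {M : Matrix n n R}
    (hM : M.IsSymm) (v w : n → R) : v ⬝ᵥ (M *ᵥ w) = w ⬝ᵥ (M *ᵥ v) := by
  rw [dotProduct_mulVec, ← mulVec_transpose, hM.eq, dotProduct_comm]

variable [DecidableEq n]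

lemma IsSymm.dotProduct_mulVec_sub_inv_mulVec {R : Type*} [CommRing R] {M : Matrix n n R}
    (hM : M.IsSymm) (hdet : IsUnit M.det) (g u : n → R) :
    (u - M⁻¹ *ᵥ g) ⬝ᵥ (M *ᵥ (u - M⁻¹ *ᵥ g))
      = u ⬝ᵥ (M *ᵥ u) - 2 * (g ⬝ᵥ u) + g ⬝ᵥ (M⁻¹ *ᵥ g) := by
  have hMg : M *ᵥ (M⁻¹ *ᵥ g) = g := by rw [mulVec_mulVec, mul_nonsing_inv _ hdet, one_mulVec]
  rw [mulVec_sub, hMg, dotProduct_sub, sub_dotProduct, sub_dotProduct,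
    hM.dotProduct_mulVec_comm (M⁻¹ *ᵥ g) u, hMg, dotProduct_comm u g,
    dotProduct_comm (M⁻¹ *ᵥ g) g]
  ring

section Field

variable {K : Type*} [Field K] {c : K} {D : Matrix n n K}

lemma inv_one_add_inv_smul (hc : c ≠ 0) (hcD : IsUnit (c • 1 + D).det) :
    (1 + c⁻¹ • D)⁻¹ = c • (c • 1 + D)⁻¹ := by
  apply inv_eq_right_inv
  rw [Matrix.mul_smul, ← Matrix.smul_mul, smul_add, smul_smul, mul_inv_cancel₀ hc, one_smul,
    mul_nonsing_inv _ hcD]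

lemma inv_inv_add_inv_smul_one (hc : c ≠ 0) (hD : IsUnit D.det) (hcD : IsUnit (c • 1 + D).det) :
    (D⁻¹ + c⁻¹ • 1)⁻¹ = c • 1 - c ^ 2 • (c • 1 + D)⁻¹ := by
  set R := (c • 1 + D)⁻¹
  have hR : c • R + D * R = 1 := by
    rw [← mul_nonsing_inv _ hcD, add_mul, smul_mul, one_mul]
  apply inv_eq_right_inv
  calc (D⁻¹ + c⁻¹ • 1) * (c • 1 - c ^ 2 • R)
      = c • D⁻¹ * (1 - c • R) + (1 - c • R) := by
        simp only [add_mul, mul_sub, Matrix.smul_mul, Matrix.mul_smul, mul_one, one_mul, smul_smul]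
        match_scalars <;> field_simp
    _ = c • R + (1 - c • R) := by
        rw [← hR, add_sub_cancel_left, smul_mul, ← mul_assoc, nonsing_inv_mul _ hD, one_mul]
    _ = 1 := add_sub_cancel _ _

end Field

end Matrix

section Quadratic

variable {n : Type*}

lemma Matrix.PosDef.isSymm {M : Matrix n n ℝ} (hM : M.PosDef) : M.IsSymm :=
  isHermitian_iff_isSymm.mp hM.isHermitian

variable [Fintype n]

def quadraticFn (M : Matrix n n ℝ) (e : n → ℝ) (f : ℝ) (w : n → ℝ) : ℝ :=
  w ⬝ᵥ (M *ᵥ w) - 2 * (e ⬝ᵥ w) + f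

lemma quadraticFn_add_sq (M : Matrix n n ℝ) (e x : n → ℝ) (f y : ℝ) (w : n → ℝ) :
    quadraticFn M e f w + (y - w ⬝ᵥ x) ^ 2
      = quadraticFn (M + vecMulVec x x) (e + y • x) (f + y ^ 2) w := by
  simp only [quadraticFn, add_mulVec, vecMulVec_mulVec, op_smul_eq_smul, dotProduct_add,
    add_dotProduct, dotProduct_smul, smul_dotProduct, smul_eq_mul, dotProduct_comm w x]
  ring

lemma Matrix.PosDef.dotProduct_mulVec_self_nonneg {M : Matrix n n ℝ} (hM : M.PosDef)
    (v : n → ℝ) : 0 ≤ v ⬝ᵥ (M *ᵥ v) := by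
  simpa using hM.posSemidef.dotProduct_mulVec_nonneg v

variable [DecidableEq n]

lemma Matrix.PosDef.isUnit_det {M : Matrix n n ℝ} (hM : M.PosDef) : IsUnit M.det :=
  (isUnit_iff_isUnit_det M).mp hM.isUnit

lemma Matrix.PosDef.isLeast_range_quadraticFn {M : Matrix n n ℝ} (hM : M.PosDef)
    (e : n → ℝ) (f : ℝ) :
    IsLeast (Set.range (quadraticFn M e f)) (-(e ⬝ᵥ (M⁻¹ *ᵥ e)) + f) := by
  have hsq (w : n → ℝ) : quadraticFn M e f w
      = -(e ⬝ᵥ (M⁻¹ *ᵥ e)) + f + (w - M⁻¹ *ᵥ e) ⬝ᵥ (M *ᵥ (w - M⁻¹ *ᵥ e)) := by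
    rw [hM.isSymm.dotProduct_mulVec_sub_inv_mulVec hM.isUnit_det, quadraticFn]
    ring
  refine ⟨⟨M⁻¹ *ᵥ e, by simp [hsq]⟩, ?_⟩
  rintro _ ⟨w, rfl⟩
  rw [hsq]
  linarith [hM.dotProduct_mulVec_self_nonneg (w - M⁻¹ *ᵥ e)]

lemma Matrix.PosDef.quadraticFn_add_smul_dotProduct_sub {c : ℝ} (hc : 0 < c)
    {D : Matrix n n ℝ} (hD : D.PosDef) (e : n → ℝ) (f : ℝ) (v w : n → ℝ) :
    quadraticFn D e f v + c * ((w - v) ⬝ᵥ (w - v))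
      = quadraticFn (D⁻¹ + c⁻¹ • 1)⁻¹ ((1 + c⁻¹ • D)⁻¹ *ᵥ e)
          (f - e ⬝ᵥ ((c • 1 + D)⁻¹ *ᵥ e)) w
        + (v - (c • 1 + D)⁻¹ *ᵥ (e + c • w)) ⬝ᵥ
            ((c • 1 + D) *ᵥ (v - (c • 1 + D)⁻¹ *ᵥ (e + c • w))) := by
  have hcD : (c • 1 + D).PosDef := (PosDef.one.smul hc).add hD
  rw [inv_inv_add_inv_smul_one hc.ne' hD.isUnit_det hcD.isUnit_det,
    inv_one_add_inv_smul hc.ne' hcD.isUnit_det,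
    hcD.isSymm.dotProduct_mulVec_sub_inv_mulVec hcD.isUnit_det]
  set R := (c • 1 + D)⁻¹
  have hR : R.IsSymm := hcD.inv.isSymm
  simp only [quadraticFn, add_mulVec, sub_mulVec, smul_mulVec, one_mulVec, mulVec_add,
    mulVec_smul, dotProduct_add, add_dotProduct, dotProduct_sub, sub_dotProduct,
    dotProduct_smul, smul_dotProduct, smul_eq_mul, dotProduct_comm w v, dotProduct_comm e v,
    dotProduct_comm (R *ᵥ e) w, hR.dotProduct_mulVec_comm e w]
  ring

end Quadratic

section Lasec

variable {d : ℕ} {b c : ℝ} {x : ℕ → Fin d → ℝ} {y : ℕ → ℝ}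

lemma lasecD_posDef (hb : 0 < b) (hc : 0 < c) : ∀ n : ℕ, (lasecD d b c x (n + 1)).PosDef
  | 0 => by
    rw [lasecD]
    exact (PosDef.one.smul hb).add_posSemidef (by simpa using posSemidef_vecMulVec_self_star (x 1))
  | n + 1 => by
    rw [lasecD]
    exact ((lasecD_posDef hb hc n).inv.add (PosDef.one.smul (inv_pos.2 hc))).inv.add_posSemidef
      (by simpa using posSemidef_vecMulVec_self_star (x (n + 2)))

lemma lasecQ_one (u : ℕ → Fin d → ℝ) :
    lasecQ d b c x y 1 u
      = quadraticFn (lasecD d b c x 1) (lasecE d b c x y 1) (lasecF d b c x y 1) (u 1) := by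
  have h := quadraticFn_add_sq (b • 1) 0 (x 1) 0 (y 1) (u 1)
  rw [zero_add, zero_add] at h
  rw [lasecD, lasecE, lasecF, ← h]
  simp [lasecQ, quadraticFn, smul_mulVec, dotProduct, sq, Finset.mul_sum, mul_left_comm]

lemma lasecQ_succ (n : ℕ) (u : ℕ → Fin d → ℝ) :
    lasecQ d b c x y (n + 2) u = lasecQ d b c x y (n + 1) u
      + c * ((u (n + 2) - u (n + 1)) ⬝ᵥ (u (n + 2) - u (n + 1)))
      + (y (n + 2) - u (n + 2) ⬝ᵥ x (n + 2)) ^ 2 := by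
  rw [lasecQ, lasecQ, show n + 2 - 1 = n + 1 from rfl, show n + 1 - 1 = n from rfl,
    sum_Icc_succ_top (Nat.le_add_left 1 n), sum_Icc_succ_top (Nat.le_add_left 1 (n + 1))]
  simp only [dotProduct, Pi.sub_apply, ← sq]
  ring

lemma lasecQ_update_add_two (n : ℕ) (u : ℕ → Fin d → ℝ) (w : Fin d → ℝ) :
    lasecQ d b c x y (n + 1) (Function.update u (n + 2) w) = lasecQ d b c x y (n + 1) u := by
  have hu (r : ℕ) (hr : r ≤ n + 1) : Function.update u (n + 2) w r = u r :=
    Function.update_of_ne (show r ≠ n + 2 by omega) _ _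
  unfold lasecQ
  rw [hu 1 (by omega)]
  congr 1
  · congr 2
    refine sum_congr rfl fun r hr => ?_
    rw [mem_Icc] at hr
    rw [hu r (by omega), hu (r + 1) (by omega)]
  · refine sum_congr rfl fun r hr => ?_
    rw [mem_Icc] at hr
    rw [hu r hr.2]

lemma quadraticFn_lasec_step (hb : 0 < b) (hc : 0 < c) (n : ℕ) (v w : Fin d → ℝ) :
    quadraticFn (lasecD d b c x (n + 1)) (lasecE d b c x y (n + 1)) (lasecF d b c x y (n + 1)) v
        + c * ((w - v) ⬝ᵥ (w - v)) + (y (n + 2) - w ⬝ᵥ x (n + 2)) ^ 2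
      = quadraticFn (lasecD d b c x (n + 2)) (lasecE d b c x y (n + 2))
          (lasecF d b c x y (n + 2)) w
        + (v - (c • 1 + lasecD d b c x (n + 1))⁻¹ *ᵥ (lasecE d b c x y (n + 1) + c • w)) ⬝ᵥ
            ((c • 1 + lasecD d b c x (n + 1)) *ᵥ
              (v - (c • 1 + lasecD d b c x (n + 1))⁻¹ *ᵥ (lasecE d b c x y (n + 1) + c • w))) := by
  rw [(lasecD_posDef hb hc n).quadraticFn_add_smul_dotProduct_sub hc, add_right_comm,
    quadraticFn_add_sq, lasecD, lasecE, lasecF]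

lemma isLeast_lasecQ_with_last_eq (hb : 0 < b) (hc : 0 < c) (n : ℕ) (w : Fin d → ℝ) :
    IsLeast {r : ℝ | ∃ u : ℕ → Fin d → ℝ, u (n + 1) = w ∧ r = lasecQ d b c x y (n + 1) u}
      (quadraticFn (lasecD d b c x (n + 1)) (lasecE d b c x y (n + 1))
        (lasecF d b c x y (n + 1)) w) := by
  induction n generalizing w with
  | zero =>
    refine ⟨⟨fun _ => w, rfl, (lasecQ_one fun _ => w).symm⟩, ?_⟩
    rintro _ ⟨u, rfl, rfl⟩
    exact (lasecQ_one u).ge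
  | succ n ih =>
    have hcD : (c • 1 + lasecD d b c x (n + 1)).PosDef :=
      (PosDef.one.smul hc).add (lasecD_posDef hb hc n)
    constructor
    · obtain ⟨u, hu, hQ⟩ := (ih _).1
      refine ⟨Function.update u (n + 2) w, Function.update_self .., ?_⟩
      rw [lasecQ_succ, lasecQ_update_add_two, Function.update_self,
        Function.update_of_ne (by omega), hu, ← hQ, quadraticFn_lasec_step hb hc,
        sub_self, mulVec_zero, dotProduct_zero, add_zero]
    · rintro _ ⟨u, rfl, rfl⟩
      have hQ := (ih (u (n + 1))).2 ⟨u, rfl, rfl⟩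
      have hstep := quadraticFn_lasec_step (x := x) (y := y) hb hc n (u (n + 1)) (u (n + 2))
      have hsq := hcD.dotProduct_mulVec_self_nonneg (u (n + 1) -
        (c • 1 + lasecD d b c x (n + 1))⁻¹ *ᵥ (lasecE d b c x y (n + 1) + c • u (n + 2)))
      rw [lasecQ_succ]
      linarith

end Lasec

theorem lasec_min_Q_general (d : ℕ) (b c : ℝ) (hb : 0 < b) (hbc : b < c)
    (x : ℕ → Fin d → ℝ) (y : ℕ → ℝ) :
    ∀ t : ℕ, 1 ≤ t →
      IsLeast {r : ℝ | ∃ u : ℕ → Fin d → ℝ, r = lasecQ d b c x y t u}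
        (-(lasecE d b c x y t ⬝ᵥ ((lasecD d b c x t)⁻¹ *ᵥ lasecE d b c x y t))
          + lasecF d b c x y t) := by
  intro t ht
  obtain ⟨n, rfl⟩ := Nat.exists_eq_add_of_le' ht
  have hc : 0 < c := hb.trans hbc
  obtain ⟨⟨w, hw⟩, hmin⟩ := (lasecD_posDef (x := x) hb hc n).isLeast_range_quadraticFn
    (lasecE d b c x y (n + 1)) (lasecF d b c x y (n + 1))
  obtain ⟨u, -, hQ⟩ := (isLeast_lasecQ_with_last_eq hb hc n w).1
  refine ⟨⟨u, by rw [← hQ, hw]⟩, ?_⟩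
  rintro _ ⟨u, rfl⟩
  exact (hmin ⟨u (n + 1), rfl⟩).trans ((isLeast_lasecQ_with_last_eq hb hc n _).2 ⟨u, rfl, rfl⟩)

/-- for every `t ≥ 1`, the infimum of
`Q_t(u_1,…,u_t)` over all `(u_1,…,u_t)` is attained and equals
`-e_tᵀ D_t⁻¹ e_t + f_t`. -/
theorem lasec_min_Q (d : ℕ) (hd : 1 ≤ d) (b c : ℝ) (hb : 0 < b) (hbc : b < c)
    (x : ℕ → Fin d → ℝ) (y : ℕ → ℝ) :
    ∀ t : ℕ, 1 ≤ t →
      IsLeast {r : ℝ | ∃ u : ℕ → Fin d → ℝ, r = lasecQ d b c x y t u}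
        (-(lasecE d b c x y t ⬝ᵥ ((lasecD d b c x t)⁻¹ *ᵥ lasecE d b c x y t))
          + lasecF d b c x y t) :=
  lasec_min_Q_general d b c hb hbc x y

end
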